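/- arXiv:2502.08979 — 2 statements merged into one kernel-verified Lean document; each statement's English description precedes it below -/
import Mathlib

section
/- Fix q > 0 and let N̄_{q,0} = {(a₁,a₂,a₃) ∈ (ℝ³)³ : ⟨aᵢ,aⱼ⟩ = 0 for i ≠ j, ‖a₁‖² − ‖a₂‖² = q, ‖a₂‖² = ‖a₃‖², ⟨a₁, a₂ × a₃⟩ ≤ 0} (the closure of the type-1 leaf N_{q,0}). Then the map (a₁,a₂,a₃) ↦ a₁ + i·a₂ ∈ ℂ³ is a homeomorphism from N̄_{q,0} onto the regular-orbit quadric {v ∈ ℂ³ : v₁² + v₂² + v₃² = q}. -/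
open scoped RealInnerProductSpace

noncomputable section

/-- `ℝ³` with the standard (Euclidean) inner product. -/
abbrev E3 : Type := EuclideanSpace ℝ (Fin 3)

/-- The cross product on `ℝ³`. -/
def cross (u v : E3) : E3 :=
  (WithLp.equiv 2 (Fin 3 → ℝ)).symm
    (crossProduct ((WithLp.equiv 2 (Fin 3 → ℝ)) u) ((WithLp.equiv 2 (Fin 3 → ℝ)) v))

/-- `Φ(a₁,a₂,a₃) = ⟨a₁, a₂ × a₃⟩`. -/
def Phi (a : E3 × E3 × E3) : ℝ := ⟪a.1, cross a.2.1 a.2.2⟫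

/-- The five Casimir functions collected into a map `(ℝ³)³ → ℝ⁵`. -/
def casimir (a : E3 × E3 × E3) : Fin 5 → ℝ :=
  ![⟪a.1, a.2.1⟫, ⟪a.2.1, a.2.2⟫, ⟪a.2.2, a.1⟫,
    ‖a.1‖ ^ 2 - ‖a.2.1‖ ^ 2, ‖a.2.1‖ ^ 2 - ‖a.2.2‖ ^ 2]

/-- The vector field `V₀(a) = (a₂×a₃, a₃×a₁, a₁×a₂)`. -/
def V0 (a : E3 × E3 × E3) : E3 × E3 × E3 :=
  (cross a.2.1 a.2.2, cross a.2.2 a.1, cross a.1 a.2.1)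

/-- The vector field `V₁(a) = (0, a₂×a₁, a₃×a₁)`. -/
def V1 (a : E3 × E3 × E3) : E3 × E3 × E3 :=
  (0, cross a.2.1 a.1, cross a.2.2 a.1)

/-- The vector field `V₂(a) = (a₁×a₂, 0, a₃×a₂)`. -/
def V2 (a : E3 × E3 × E3) : E3 × E3 × E3 :=
  (cross a.1 a.2.1, 0, cross a.2.2 a.2.1)

/-- The vector field `V₃(a) = (a₁×a₃, a₂×a₃, 0)`. -/
def V3 (a : E3 × E3 × E3) : E3 × E3 × E3 :=
  (cross a.1 a.2.2, cross a.2.1 a.2.2, 0)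


/-- The closure `N̄_{q,0}` of the type-1 leaf `N_{q,0}`. -/
def NbarQ0 (q : ℝ) : Set (E3 × E3 × E3) :=
  {a | ⟪a.1, a.2.1⟫ = 0 ∧ ⟪a.2.1, a.2.2⟫ = 0 ∧ ⟪a.2.2, a.1⟫ = 0 ∧
    ‖a.1‖ ^ 2 - ‖a.2.1‖ ^ 2 = q ∧ ‖a.2.1‖ ^ 2 = ‖a.2.2‖ ^ 2 ∧ Phi a ≤ 0}

/-- The regular-orbit quadric `{v ∈ ℂ³ : v₁² + v₂² + v₃² = q}`. -/
def quadric (q : ℝ) : Set (Fin 3 → ℂ) :=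
  {v | v 0 ^ 2 + v 1 ^ 2 + v 2 ^ 2 = (q : ℂ)}

/-- The projection `pr₁₂(a₁,a₂,a₃) = a₁ + i·a₂ ∈ ℂ³`. -/
def pr12 (a : E3 × E3 × E3) : Fin 3 → ℂ :=
  fun j => (a.1 j : ℂ) + Complex.I * (a.2.1 j : ℂ)

/-! ### Auxiliary lemmas -/

lemma cross_apply0 (u v : E3) : cross u v 0 = u 1 * v 2 - u 2 * v 1 := by
  simp [cross, crossProduct]
lemma cross_apply1 (u v : E3) : cross u v 1 = u 2 * v 0 - u 0 * v 2 := by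
  simp [cross, crossProduct]
lemma cross_apply2 (u v : E3) : cross u v 2 = u 0 * v 1 - u 1 * v 0 := by
  simp [cross, crossProduct]

lemma inner3 (u v : E3) : ⟪u,v⟫ = u 0 * v 0 + u 1 * v 1 + u 2 * v 2 := by
  simp [PiLp.inner_apply, Fin.sum_univ_three]; ring
lemma normsq3 (u : E3) : ‖u‖^2 = u 0^2 + u 1^2 + u 2^2 := by
  rw [← real_inner_self_eq_norm_sq, inner3]; ring

/-- Cyclic symmetry of the scalar triple product. -/
lemma triple (x y z : E3) : ⟪z, cross x y⟫ = ⟪x, cross y z⟫ := by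
  simp only [inner3, cross_apply0, cross_apply1, cross_apply2]; ring

/-- Lagrange's identity. -/
lemma lagrange (x y : E3) : ‖cross x y‖^2 = ‖x‖^2*‖y‖^2 - ⟪x,y⟫^2 := by
  simp only [normsq3, inner3, cross_apply0, cross_apply1, cross_apply2]; ring

/-- Gram determinant identity for the triple product. -/
lemma gram (x y z : E3) : ⟪x, cross y z⟫^2 =
    ‖x‖^2*‖y‖^2*‖z‖^2 + 2*⟪x,y⟫*⟪y,z⟫*⟪z,x⟫
      - ‖x‖^2*⟪y,z⟫^2 - ‖y‖^2*⟪z,x⟫^2 - ‖z‖^2*⟪x,y⟫^2 := by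
  simp only [normsq3, inner3, cross_apply0, cross_apply1, cross_apply2]; ring

lemma inner_self_cross (x y : E3) : ⟪x, cross x y⟫ = 0 := by
  simp only [inner3, cross_apply0, cross_apply1, cross_apply2]; ring
lemma inner_self_cross' (x y : E3) : ⟪y, cross x y⟫ = 0 := by
  simp only [inner3, cross_apply0, cross_apply1, cross_apply2]; ring

lemma continuous_coord (j : Fin 3) : Continuous fun u : E3 => u j :=
  (EuclideanSpace.proj j : E3 →L[ℝ] ℝ).continuous

lemma continuous_cross : Continuous fun p : E3 × E3 => cross p.1 p.2 := by
  have h : Continuous fun p : E3 × E3 => (fun j => cross p.1 p.2 j : Fin 3 → ℝ) := by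
    refine continuous_pi fun j => ?_
    fin_cases j
    · simp only [cross_apply0]
      exact (((continuous_coord 1).comp continuous_fst).mul
        ((continuous_coord 2).comp continuous_snd)).sub
        (((continuous_coord 2).comp continuous_fst).mul
        ((continuous_coord 1).comp continuous_snd))
    · simp only [cross_apply1]
      exact (((continuous_coord 2).comp continuous_fst).mul
        ((continuous_coord 0).comp continuous_snd)).sub
        (((continuous_coord 0).comp continuous_fst).mul
        ((continuous_coord 2).comp continuous_snd))
    · simp only [cross_apply2]
      exact (((continuous_coord 0).comp continuous_fst).mul
        ((continuous_coord 1).comp continuous_snd)).sub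
        (((continuous_coord 1).comp continuous_fst).mul
        ((continuous_coord 0).comp continuous_snd))
  exact (PiLp.continuous_toLp 2 fun _ : Fin 3 => ℝ).comp h

/-- Real part of a complex vector, as an element of `E3`. -/
def reE3 (v : Fin 3 → ℂ) : E3 := (WithLp.equiv 2 (Fin 3 → ℝ)).symm fun j => (v j).re
/-- Imaginary part of a complex vector, as an element of `E3`. -/
def imE3 (v : Fin 3 → ℂ) : E3 := (WithLp.equiv 2 (Fin 3 → ℝ)).symm fun j => (v j).im

lemma reE3_apply (v : Fin 3 → ℂ) (j : Fin 3) : reE3 v j = (v j).re := rfl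
lemma imE3_apply (v : Fin 3 → ℂ) (j : Fin 3) : imE3 v j = (v j).im := rfl

lemma continuous_reE3 : Continuous reE3 :=
  (PiLp.continuous_toLp 2 fun _ : Fin 3 => ℝ).comp
    (continuous_pi fun j => Complex.continuous_re.comp (continuous_apply j))
lemma continuous_imE3 : Continuous imE3 :=
  (PiLp.continuous_toLp 2 fun _ : Fin 3 => ℝ).comp
    (continuous_pi fun j => Complex.continuous_im.comp (continuous_apply j))

lemma continuous_pr12 : Continuous pr12 := by
  refine continuous_pi fun j => ?_
  exact (Complex.continuous_ofReal.comp
      ((continuous_coord j).comp continuous_fst)).add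
    (continuous_const.mul (Complex.continuous_ofReal.comp
      ((continuous_coord j).comp (continuous_fst.comp continuous_snd))))

/-- The inverse map of `pr₁₂`. -/
def ginv (q : ℝ) (v : Fin 3 → ℂ) : E3 × E3 × E3 :=
  (reE3 v, imE3 v,
    (-(Real.sqrt (q + ‖imE3 v‖^2))⁻¹) • cross (reE3 v) (imE3 v))

lemma continuous_ginv (q : ℝ) (hq : 0 < q) : Continuous (ginv q) := by
  refine continuous_reE3.prodMk (continuous_imE3.prodMk (Continuous.fun_smul ?_ ?_))
  · refine Continuous.neg (Continuous.inv₀ ?_ ?_)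
    · exact (continuous_const.add ((continuous_norm.comp continuous_imE3).pow 2)).sqrt
    · intro v
      have h1 : (0:ℝ) < q + ‖imE3 v‖^2 := by positivity
      exact ne_of_gt (Real.sqrt_pos.mpr h1)
  · exact continuous_cross.comp (continuous_reE3.prodMk continuous_imE3)

/-- Extraction of the real conditions from membership in the quadric. -/
lemma quadric_conds {q : ℝ} {v : Fin 3 → ℂ} (hv : v ∈ quadric q) :
    ⟪reE3 v, imE3 v⟫ = 0 ∧ ‖reE3 v‖^2 - ‖imE3 v‖^2 = q := by
  have hre := congrArg Complex.re hv
  have him := congrArg Complex.im hv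
  simp only [Complex.add_re, Complex.add_im, pow_two, Complex.mul_re, Complex.mul_im,
    Complex.ofReal_re, Complex.ofReal_im] at hre him
  constructor
  · rw [inner3]
    simp only [reE3_apply, imE3_apply]
    linarith
  · rw [normsq3, normsq3]
    simp only [reE3_apply, imE3_apply, pow_two]
    linarith

/-- `pr12` maps `N̄_{q,0}` into the quadric. -/
lemma pr12_mem_quadric {q : ℝ} {a : E3 × E3 × E3} (ha : a ∈ NbarQ0 q) :
    pr12 a ∈ quadric q := by
  obtain ⟨h1, _, _, h4, _, _⟩ := ha
  rw [inner3] at h1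
  rw [normsq3, normsq3] at h4
  show (pr12 a) 0 ^ 2 + (pr12 a) 1 ^ 2 + (pr12 a) 2 ^ 2 = (q : ℂ)
  simp only [pr12]
  apply Complex.ext
  · simp only [Complex.add_re, Complex.add_im, pow_two, Complex.mul_re, Complex.mul_im,
      Complex.ofReal_re, Complex.ofReal_im, Complex.I_re, Complex.I_im]
    ring_nf
    ring_nf at h4
    linarith
  · simp only [Complex.add_re, Complex.add_im, pow_two, Complex.mul_re, Complex.mul_im,
      Complex.ofReal_re, Complex.ofReal_im, Complex.I_re, Complex.I_im]
    ring_nf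
    ring_nf at h1
    linarith

/-- `ginv` maps the quadric into `N̄_{q,0}`. -/
lemma ginv_mem_NbarQ0 {q : ℝ} (hq : 0 < q) {v : Fin 3 → ℂ} (hv : v ∈ quadric q) :
    ginv q v ∈ NbarQ0 q := by
  obtain ⟨h1, h4⟩ := quadric_conds hv
  set x := reE3 v with hx
  set y := imE3 v with hy
  set c : ℝ := -(Real.sqrt (q + ‖y‖^2))⁻¹ with hc
  have hpos : (0:ℝ) < q + ‖y‖^2 := by positivity
  have hsq : (Real.sqrt (q + ‖y‖^2))^2 = q + ‖y‖^2 := Real.sq_sqrt hpos.le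
  have hsqrtpos : 0 < Real.sqrt (q + ‖y‖^2) := Real.sqrt_pos.mpr hpos
  have hc2 : c^2 = (q + ‖y‖^2)⁻¹ := by
    rw [hc, neg_sq, inv_pow, hsq]
  have hcle : c ≤ 0 := by
    rw [hc]
    simp only [neg_nonpos]
    positivity
  have hxsq : ‖x‖^2 = q + ‖y‖^2 := by linarith
  refine ⟨h1, ?_, ?_, h4, ?_, ?_⟩
  · show ⟪y, c • cross x y⟫ = 0
    rw [real_inner_smul_right, inner_self_cross', mul_zero]
  · show ⟪c • cross x y, x⟫ = 0
    rw [real_inner_smul_left, real_inner_comm, inner_self_cross, mul_zero]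
  · show ‖y‖^2 = ‖c • cross x y‖^2
    rw [norm_smul, mul_pow, Real.norm_eq_abs, sq_abs, hc2, lagrange, h1]
    rw [hxsq]
    field_simp
    ring
  · show Phi (x, y, c • cross x y) ≤ 0
    have : Phi (x, y, c • cross x y) = c * ‖cross x y‖^2 := by
      show ⟪x, cross y (c • cross x y)⟫ = c * ‖cross x y‖^2
      rw [← triple, real_inner_smul_left, real_inner_self_eq_norm_sq]
    rw [this]
    exact mul_nonpos_of_nonpos_of_nonneg hcle (by positivity)

/-- Left inverse: `ginv q (pr12 a) = a` on `N̄_{q,0}`. -/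
lemma ginv_pr12 {q : ℝ} (hq : 0 < q) {a : E3 × E3 × E3} (ha : a ∈ NbarQ0 q) :
    ginv q (pr12 a) = a := by
  obtain ⟨h1, h2, h3, h4, h5, h6⟩ := ha
  set x := a.1 with hx
  set y := a.2.1 with hy
  set z := a.2.2 with hz
  have hrx : reE3 (pr12 a) = x := by
    ext j
    rw [reE3_apply]
    simp [pr12]
    rfl
  have hiy : imE3 (pr12 a) = y := by
    ext j
    rw [imE3_apply]
    simp [pr12]
    rfl
  have hxsq : ‖x‖^2 = q + ‖y‖^2 := by linarith
  have hxpos : (0:ℝ) < ‖x‖ := by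
    have h : (0:ℝ) < ‖x‖^2 := by rw [hxsq]; positivity
    nlinarith [norm_nonneg x]
  have hsqrt : Real.sqrt (q + ‖y‖^2) = ‖x‖ := by
    rw [← hxsq, Real.sqrt_sq (norm_nonneg x)]
  -- Φ = −‖x‖‖y‖²
  have hPhi : Phi a = ⟪x, cross y z⟫ := rfl
  have hgram := gram x y z
  rw [h1, h2, h3] at hgram
  rw [← h5] at hgram
  have hPhival : ⟪x, cross y z⟫ = -(‖x‖ * ‖y‖^2) := by
    rw [hPhi] at h6
    have hsq : ⟪x, cross y z⟫^2 = (‖x‖ * ‖y‖^2)^2 := by rw [hgram]; ring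
    nlinarith [mul_nonneg hxpos.le (sq_nonneg ‖y‖), hsq, h6]
  -- ‖x‖ • z + cross x y = 0
  have hkey : ‖x‖ • z + cross x y = 0 := by
    have hn : ‖‖x‖ • z + cross x y‖^2 = 0 := by
      rw [norm_add_sq_real, norm_smul, norm_norm, real_inner_smul_left, mul_pow,
        lagrange, h1, triple, hPhival, ← h5]
      ring
    have := (norm_eq_zero (a := ‖x‖ • z + cross x y)).mp (by
      have := sq_eq_zero_iff.mp hn
      exact this)
    exact this
  have hzeq : z = (-(‖x‖)⁻¹) • cross x y := by
    have hcx : cross x y = -(‖x‖ • z) := by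
      rw [eq_neg_iff_add_eq_zero]
      linear_combination (norm := module) hkey
    rw [hcx, smul_neg, neg_smul, neg_neg, smul_smul, inv_mul_cancel₀ hxpos.ne', one_smul]
  show (reE3 (pr12 a), imE3 (pr12 a),
      (-(Real.sqrt (q + ‖imE3 (pr12 a)‖^2))⁻¹) • cross (reE3 (pr12 a)) (imE3 (pr12 a))) = a
  rw [hrx, hiy, hsqrt, ← hzeq]

/-- Right inverse: `pr12 (ginv q v) = v`. -/
lemma pr12_ginv (q : ℝ) (v : Fin 3 → ℂ) : pr12 (ginv q v) = v := by
  funext j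
  show ((reE3 v j : ℝ) : ℂ) + Complex.I * ((imE3 v j : ℝ) : ℂ) = v j
  rw [reE3_apply, imE3_apply]
  rw [mul_comm]
  exact Complex.re_add_im (v j)

/-- For `q > 0`, the map `a ↦ a₁ + i·a₂` is a homeomorphism from the extended type-1 leaf
`N̄_{q,0}` onto the regular-orbit quadric `{v₁² + v₂² + v₃² = q}`. -/
theorem NbarQ0_homeomorph_quadric (q : ℝ) (hq : 0 < q) :
    ∃ H : NbarQ0 q ≃ₜ quadric q,
      ∀ a : NbarQ0 q, (H a : Fin 3 → ℂ) = pr12 (a : E3 × E3 × E3) := by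
  refine ⟨{
    toFun := fun a => ⟨pr12 a, pr12_mem_quadric a.2⟩
    invFun := fun v => ⟨ginv q v, ginv_mem_NbarQ0 hq v.2⟩
    left_inv := fun a => Subtype.ext (ginv_pr12 hq a.2)
    right_inv := fun v => Subtype.ext (pr12_ginv q v)
    continuous_toFun := by
      exact Continuous.subtype_mk
        (continuous_pr12.comp continuous_subtype_val) _
    continuous_invFun := by
      exact Continuous.subtype_mk
        ((continuous_ginv q hq).comp continuous_subtype_val) _ }, fun a => rfl⟩

end
end

section
/- Let B = (B₁,B₂,B₃) : (−∞,0] → (ℝ³)³ be a differentiable solution of Nahm's equations B₁' = −B₂ × B₃, B₂' = −B₃ × B₁, B₃' = −B₁ × B₂, and suppose ⟨B₁(t), B₂(t) × B₃(t)⟩ → 0 as t → −∞. Then the function t ↦ ‖B₂(t) × B₃(t)‖² + ‖B₃(t) × B₁(t)‖² + ‖B₁(t) × B₂(t)‖² is integrable on (−∞,0] and ∫_{−∞}^{0} (‖B₂ × B₃‖² + ‖B₃ × B₁‖² + ‖B₁ × B₂‖²) dt = −⟨B₁(0), B₂(0) × B₃(0)⟩. -/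
open scoped RealInnerProductSpace

noncomputable section

lemma inner_cross_cyclic (u v w : E3) : ⟪u, cross v w⟫ = ⟪w, cross u v⟫ := by
  simp [cross, PiLp.inner_apply, cross_apply, Fin.sum_univ_three, PiLp.toLp_apply]
  ring

def crossLM : E3 →ₗ[ℝ] E3 →ₗ[ℝ] E3 :=
  LinearMap.mk₂ ℝ cross
    (fun u u' v => by simp [cross, map_add, LinearMap.add_apply])
    (fun c u v => by simp [cross, map_smul, LinearMap.smul_apply])
    (fun u v v' => by simp [cross, map_add])
    (fun c u v => by simp [cross, map_smul])

def crossL : E3 →L[ℝ] E3 →L[ℝ] E3 :=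
  LinearMap.toContinuousLinearMap
    { toFun := fun u => LinearMap.toContinuousLinearMap (crossLM u),
      map_add' := fun u u' => by ext v; simp [crossLM],
      map_smul' := fun c u => by ext v; simp [crossLM] }

@[simp] lemma crossL_apply (u v : E3) : crossL u v = cross u v := rfl

lemma cross_neg_left (u v : E3) : cross (-u) v = -(cross u v) := by
  rw [← crossL_apply, ← crossL_apply, map_neg, ContinuousLinearMap.neg_apply]

lemma cross_neg_right (u v : E3) : cross u (-v) = -(cross u v) := by
  rw [← crossL_apply, ← crossL_apply, map_neg]

lemma HasDerivWithinAt.cross' {f g : ℝ → E3} {f' g' : E3} {s : Set ℝ} {t : ℝ}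
    (hf : HasDerivWithinAt f f' s t) (hg : HasDerivWithinAt g g' s t) :
    HasDerivWithinAt (fun x => cross (f x) (g x))
      (cross f' (g t) + cross (f t) g') s t := by
  have hc : HasDerivWithinAt (fun x => crossL (f x)) (crossL f') s t :=
    (crossL.hasFDerivAt).comp_hasDerivWithinAt t hf
  simpa using hc.clm_apply hg


open MeasureTheory in
/-- For a solution of Nahm's equations on `(−∞,0]` with `⟨B₁, B₂×B₃⟩ → 0` at `−∞`, the
function `‖B₂×B₃‖² + ‖B₃×B₁‖² + ‖B₁×B₂‖²` is integrable on `(−∞,0]` and its integral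
equals `−⟨B₁(0), B₂(0) × B₃(0)⟩`. -/
theorem nahm_integral_identity (B₁ B₂ B₃ : ℝ → E3)
    (h₁ : ∀ t ∈ Set.Iic (0 : ℝ),
      HasDerivWithinAt B₁ (-(cross (B₂ t) (B₃ t))) (Set.Iic (0 : ℝ)) t)
    (h₂ : ∀ t ∈ Set.Iic (0 : ℝ),
      HasDerivWithinAt B₂ (-(cross (B₃ t) (B₁ t))) (Set.Iic (0 : ℝ)) t)
    (h₃ : ∀ t ∈ Set.Iic (0 : ℝ),
      HasDerivWithinAt B₃ (-(cross (B₁ t) (B₂ t))) (Set.Iic (0 : ℝ)) t)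
    (hlim : Filter.Tendsto (fun t => ⟪B₁ t, cross (B₂ t) (B₃ t)⟫)
      Filter.atBot (nhds 0)) :
    IntegrableOn
      (fun t => ‖cross (B₂ t) (B₃ t)‖ ^ 2 + ‖cross (B₃ t) (B₁ t)‖ ^ 2 +
        ‖cross (B₁ t) (B₂ t)‖ ^ 2) (Set.Iic (0 : ℝ)) ∧
    ∫ t in Set.Iic (0 : ℝ),
        (‖cross (B₂ t) (B₃ t)‖ ^ 2 + ‖cross (B₃ t) (B₁ t)‖ ^ 2 +
          ‖cross (B₁ t) (B₂ t)‖ ^ 2) =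
      -⟪B₁ 0, cross (B₂ 0) (B₃ 0)⟫ := by
  set F : ℝ → ℝ := fun t => ‖cross (B₂ t) (B₃ t)‖ ^ 2 + ‖cross (B₃ t) (B₁ t)‖ ^ 2 +
      ‖cross (B₁ t) (B₂ t)‖ ^ 2 with hF
  set g : ℝ → ℝ := fun t => ⟪B₁ t, cross (B₂ t) (B₃ t)⟫ with hg
  have hFnonneg : ∀ t, 0 ≤ F t := fun t => by positivity
  -- derivative of g is -F
  have hgder : ∀ t ∈ Set.Iic (0 : ℝ), HasDerivWithinAt g (-(F t)) (Set.Iic (0 : ℝ)) t := by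
    intro t ht
    have hcross := (h₂ t ht).cross' (h₃ t ht)
    have hinner := (h₁ t ht).inner ℝ hcross
    convert hinner using 1
    any_goals rfl
    have e1 : ⟪B₁ t, cross (-(cross (B₁ t) (B₂ t))) (B₂ t)⟫
        = - ⟪B₂ t, cross (B₁ t) (cross (B₁ t) (B₂ t))⟫ := by
      rw [cross_neg_left, inner_neg_right, inner_cross_cyclic]
    have key2 : ⟪B₁ t, cross (-(cross (B₃ t) (B₁ t))) (B₃ t)⟫ = -‖cross (B₃ t) (B₁ t)‖ ^ 2 := by
      rw [cross_neg_left, inner_neg_right, inner_cross_cyclic, inner_cross_cyclic,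
        real_inner_self_eq_norm_sq]
    have key3 : ⟪B₁ t, cross (B₂ t) (-(cross (B₁ t) (B₂ t)))⟫ = -‖cross (B₁ t) (B₂ t)‖ ^ 2 := by
      rw [cross_neg_right, inner_neg_right, inner_cross_cyclic, real_inner_self_eq_norm_sq]
    have key1 : ⟪-(cross (B₂ t) (B₃ t)), cross (B₂ t) (B₃ t)⟫ = -‖cross (B₂ t) (B₃ t)‖ ^ 2 := by
      rw [inner_neg_left, real_inner_self_eq_norm_sq]
    rw [inner_add_right, key3, key1, key2]
    ring
  -- continuity of F on Iic 0
  have hB₁c : ContinuousOn B₁ (Set.Iic (0:ℝ)) := fun t ht => (h₁ t ht).continuousWithinAt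
  have hB₂c : ContinuousOn B₂ (Set.Iic (0:ℝ)) := fun t ht => (h₂ t ht).continuousWithinAt
  have hB₃c : ContinuousOn B₃ (Set.Iic (0:ℝ)) := fun t ht => (h₃ t ht).continuousWithinAt
  have c23 : ContinuousOn (fun t => cross (B₂ t) (B₃ t)) (Set.Iic (0:ℝ)) :=
    fun t ht => ((h₂ t ht).cross' (h₃ t ht)).continuousWithinAt
  have c31 : ContinuousOn (fun t => cross (B₃ t) (B₁ t)) (Set.Iic (0:ℝ)) :=
    fun t ht => ((h₃ t ht).cross' (h₁ t ht)).continuousWithinAt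
  have c12 : ContinuousOn (fun t => cross (B₁ t) (B₂ t)) (Set.Iic (0:ℝ)) :=
    fun t ht => ((h₁ t ht).cross' (h₂ t ht)).continuousWithinAt
  have hFc : ContinuousOn F (Set.Iic (0:ℝ)) :=
    (((c23.norm.pow 2).add (c31.norm.pow 2)).add (c12.norm.pow 2))
  -- FTC on [a, 0]
  have key : ∀ a : ℝ, a ≤ 0 → ∫ x in a..0, F x = g a - g 0 := by
    intro a ha
    have hIcc : Set.Icc a 0 ⊆ Set.Iic (0:ℝ) := fun x hx => hx.2
    have hgc : ContinuousOn g (Set.Icc a 0) :=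
      fun t ht => ((hgder t (hIcc ht)).continuousWithinAt).mono hIcc
    have hcont : ContinuousOn (fun t => -(g t)) (Set.Icc a 0) := hgc.neg
    have hderiv : ∀ x ∈ Set.Ioo a 0, HasDerivWithinAt (fun t => -(g t)) (F x) (Set.Ioi x) x := by
      intro x hx
      have hmem : Set.Iic (0:ℝ) ∈ nhds x := Iic_mem_nhds hx.2
      have := ((hgder x (le_of_lt hx.2)).hasDerivAt hmem).neg
      exact (by simpa using this.hasDerivWithinAt : HasDerivWithinAt (-g) (F x) (Set.Ioi x) x)
    have hint : IntervalIntegrable F MeasureTheory.volume a 0 := by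
      apply ContinuousOn.intervalIntegrable
      rw [Set.uIcc_of_le ha]
      exact hFc.mono hIcc
    have := intervalIntegral.integral_eq_sub_of_hasDeriv_right_of_le ha hcont hderiv hint
    rw [this]; ring
  -- limits
  have hatend : Filter.Tendsto (fun n : ℕ => -(n:ℝ)) Filter.atTop Filter.atBot :=
    Filter.tendsto_neg_atTop_atBot.comp tendsto_natCast_atTop_atTop
  have htend : Filter.Tendsto (fun n : ℕ => ∫ x in (-(n:ℝ))..0, F x) Filter.atTop
      (nhds (-(g 0))) := by
    have h1 : Filter.Tendsto (fun n : ℕ => g (-(n:ℝ)) - g 0) Filter.atTop (nhds (0 - g 0)) :=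
      (hlim.comp hatend).sub tendsto_const_nhds
    rw [zero_sub] at h1
    refine h1.congr fun n => ?_
    rw [key _ (neg_nonpos.mpr (Nat.cast_nonneg n))]
  have hfi : ∀ n : ℕ, IntegrableOn F (Set.Ioc (-(n:ℝ)) 0) := by
    intro n
    have : IntegrableOn F (Set.Icc (-(n:ℝ)) 0) :=
      (hFc.mono (fun x hx => hx.2)).integrableOn_Icc
    exact this.mono_set Set.Ioc_subset_Icc_self
  have hnorm : Filter.Tendsto (fun n : ℕ => ∫ x in (-(n:ℝ))..0, ‖F x‖) Filter.atTop
      (nhds (-(g 0))) := by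
    refine htend.congr fun n => ?_
    apply intervalIntegral.integral_congr
    intro x hx
    exact (Real.norm_of_nonneg (hFnonneg x)).symm
  have hintg : IntegrableOn F (Set.Iic (0:ℝ)) :=
    integrableOn_Iic_of_intervalIntegral_norm_tendsto (-(g 0)) 0 hfi hatend hnorm
  refine ⟨hintg, ?_⟩
  have := intervalIntegral_tendsto_integral_Iic 0 hintg hatend
  exact tendsto_nhds_unique this htend


end
end
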